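/- Let n ≥ 1, k ≥ 1, ε > 0, and let C, σ : Fin n → Fin k be arbitrary functions. For i ∈ Fin k write C_i = {v : C(v) = i}, and let Y = {i : |C_i| ≥ εn/(4k)}. Suppose g : Fin k → Fin k satisfies, for every i ∈ Y, max_{j ∈ Fin k} |{v ∈ C_i : σ(v) = j}| ≤ |{v ∈ C_i : σ(v) = g(i)}| + (ε/4)·|C_i|. Then for every permutation π of Fin k, |{v : π(C(v)) = σ(v)}| ≤ |{v : g(C(v)) = σ(v)}| + (ε/2)·n. -/

import Mathlib

/-!
Split the vertices by cluster. On a cluster of size at least the threshold `t = ε n / (4 k)`,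
near-plurality says that any label agrees with `σ` at most `ε/4 · |C_i|` more often than `g i`
does; on a smaller cluster any label gains at most `|C_i| < t`. Summing over the `k` clusters,
the total gain is at most `ε/4 · n + k t = ε n / 2`.
-/

open Finset

section Clustering

variable {α ι β : Type*} [Fintype α] [DecidableEq ι] [DecidableEq β]
  (C : α → ι) (σ : α → β)

theorem card_filter_comp_eq_sum_card_filter_and [Fintype ι] (h : ι → β) :
    #{v | h (C v) = σ v} = ∑ i, #{v | C v = i ∧ σ v = h i} := by
  rw [card_eq_sum_card_fiberwise (f := C) (t := univ) fun v _ => mem_univ (C v)]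
  refine sum_congr rfl fun i _ => congrArg card ?_
  rw [filter_filter]
  exact filter_congr fun v _ => by grind

theorem sum_card_filter_eq_card_univ [Fintype ι] : ∑ i, #{v | C v = i} = Fintype.card α :=
  (card_eq_sum_card_fiberwise fun v _ => mem_univ (C v)).symm

theorem card_filter_and_le_of_near_plurality {t δ : ℝ} (ht : 0 ≤ t) (hδ : 0 ≤ δ) (i : ι)
    (j b : β) (hb : t ≤ #{v | C v = i} →
      (#{v | C v = i ∧ σ v = j} : ℝ) ≤ #{v | C v = i ∧ σ v = b} + δ * #{v | C v = i}) :
    (#{v | C v = i ∧ σ v = j} : ℝ) ≤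
      #{v | C v = i ∧ σ v = b} + δ * #{v | C v = i} + t := by
  have hgain : 0 ≤ δ * #{v | C v = i} := by positivity
  by_cases hbig : t ≤ #{v | C v = i}
  · linarith [hb hbig]
  · have hsub : (#{v | C v = i ∧ σ v = j} : ℝ) ≤ #{v | C v = i} := by
      exact_mod_cast card_le_card (monotone_filter_right _ fun _ _ => And.left)
    have : (0 : ℝ) ≤ #{v | C v = i ∧ σ v = b} := by positivity
    linarith

end Clustering

theorem natCast_mul_div_four_mul_natCast_le {x : ℝ} (hx : 0 ≤ x) (k : ℕ) :
    (k : ℝ) * (x / (4 * k)) ≤ x / 4 := by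
  rcases Nat.eq_zero_or_pos k with rfl | hk
  · simp only [CharP.cast_eq_zero, zero_mul]; positivity
  · rw [mul_div_assoc', mul_comm 4, mul_div_mul_left _ _ (by positivity : (k : ℝ) ≠ 0)]

theorem stmt_3_general (n k : ℕ) (ε : ℝ) (hε : 0 < ε)
    (C σ : Fin n → Fin k) (g : Fin k → Fin k)
    (hg : ∀ i : Fin k,
      (ε * n / (4 * k) : ℝ) ≤ (univ.filter fun v => C v = i).card →
      ∀ j : Fin k,
        ((univ.filter fun v => C v = i ∧ σ v = j).card : ℝ) ≤
          ((univ.filter fun v => C v = i ∧ σ v = g i).card : ℝ) +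
            (ε / 4) * (univ.filter fun v => C v = i).card) :
    ∀ π : Equiv.Perm (Fin k),
      ((univ.filter fun v => π (C v) = σ v).card : ℝ) ≤
        ((univ.filter fun v => g (C v) = σ v).card : ℝ) + (ε / 2) * n := by
  intro π
  set t : ℝ := ε * n / (4 * k)
  have hcluster (i : Fin k) := card_filter_and_le_of_near_plurality C σ (by positivity)
    (by positivity : 0 ≤ ε / 4) i (π i) (g i) fun hbig => hg i hbig (π i)
  have hsizes : ∑ i, (#{v | C v = i} : ℝ) = n := by
    exact_mod_cast (sum_card_filter_eq_card_univ C).trans (Fintype.card_fin n)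
  rw [card_filter_comp_eq_sum_card_filter_and C σ π, card_filter_comp_eq_sum_card_filter_and C σ g]
  push_cast
  calc ∑ i, (#{v | C v = i ∧ σ v = π i} : ℝ)
      ≤ ∑ i, ((#{v | C v = i ∧ σ v = g i} : ℝ) + ε / 4 * #{v | C v = i} + t) :=
        sum_le_sum fun i _ => hcluster i
    _ = ∑ i, (#{v | C v = i ∧ σ v = g i} : ℝ) + ε / 4 * n + k * t := by
        rw [sum_add_distrib, sum_add_distrib, ← mul_sum, hsizes]; simp
    _ ≤ ∑ i, (#{v | C v = i ∧ σ v = g i} : ℝ) + ε / 2 * n := by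
        have := natCast_mul_div_four_mul_natCast_le (by positivity : 0 ≤ ε * n) k
        linarith

/-- The deterministic counting argument in the proof of Proposition A.1:
a per-cluster near-plurality relabeling loses at most `ε/2` relative to the
best permutation of the labels. -/
theorem stmt_3 (n k : ℕ) (hn : 1 ≤ n) (hk : 1 ≤ k) (ε : ℝ) (hε : 0 < ε)
    (C σ : Fin n → Fin k) (g : Fin k → Fin k)
    (hg : ∀ i : Fin k,
      (ε * n / (4 * k) : ℝ) ≤ (univ.filter fun v => C v = i).card →
      ∀ j : Fin k,
        ((univ.filter fun v => C v = i ∧ σ v = j).card : ℝ) ≤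
          ((univ.filter fun v => C v = i ∧ σ v = g i).card : ℝ) +
            (ε / 4) * (univ.filter fun v => C v = i).card) :
    ∀ π : Equiv.Perm (Fin k),
      ((univ.filter fun v => π (C v) = σ v).card : ℝ) ≤
        ((univ.filter fun v => g (C v) = σ v).card : ℝ) + (ε / 2) * n :=
  stmt_3_general n k ε hε C σ g hg
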